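/- Let (i,j) be an index pair with j < n, and let (V_{k,l}) be a point of SpR_{2n} lying in Z_{i,j} and in no Z_{k,l} with (k,l) ≠ (i,j). Then for every index pair (k,l) with l > j one has V_{k,l} ∩ span(w_{l+1}, …, w_{2n}) = 0 (equivalently, the Plücker coordinate p_{1,…,k} of V_{k,l} is nonzero). -/

import Mathlib

noncomputable section

/-- The ambient 2n-dimensional complex vector space `W = ℂ^{2n}`. -/
abbrev Wsp (n : ℕ) := Fin (2*n) → ℂ

/-- The basis vector `w_k` (1-based index `k ∈ {1,…,2n}`). -/
def wvec (n k : ℕ) : Wsp n := fun i => if (i : ℕ) + 1 = k then 1 else 0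

/-- The standard symplectic form: `⟨w_i, w_{2n+1-i}⟩ = 1` for `1 ≤ i ≤ n`,
and `⟨w_i, w_j⟩ = 0` for `j ≠ 2n+1-i`. -/
def sform (n : ℕ) (x y : Wsp n) : ℂ :=
  ∑ i : Fin (2*n), (if (i : ℕ) < n then 1 else -1) * x i *
    y ⟨2*n - 1 - (i : ℕ), by have := i.isLt; omega⟩

/-- A subspace is isotropic if the symplectic form vanishes on it. -/
def IsIsotropic (n : ℕ) (U : Submodule ℂ (Wsp n)) : Prop :=
  ∀ u ∈ U, ∀ v ∈ U, sform n u v = 0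

/-- The projection `pr_k` along `w_k` (1-based). -/
def prj (n k : ℕ) : Wsp n →ₗ[ℂ] Wsp n where
  toFun x := fun i => if (i : ℕ) + 1 = k then 0 else x i
  map_add' x y := by funext i; by_cases h : (i : ℕ) + 1 = k <;> simp [h]
  map_smul' c x := by funext i; by_cases h : (i : ℕ) + 1 = k <;> simp [h]

/-- The subspace `W_{i,j} = span(w_1,…,w_i,w_{j+1},…,w_{2n})` (1-based). -/
def WIJ (n i j : ℕ) : Submodule ℂ (Wsp n) :=
  Submodule.span ℂ (wvec n '' {k | (1 ≤ k ∧ k ≤ i) ∨ (j + 1 ≤ k ∧ k ≤ 2*n)})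

/-- Orthogonal complement with respect to the symplectic form. -/
def sperp (n : ℕ) (U : Submodule ℂ (Wsp n)) : Submodule ℂ (Wsp n) where
  carrier := {x | ∀ u ∈ U, sform n x u = 0}
  zero_mem' := by intro u hu; simp [sform]
  add_mem' := by
    intro a b ha hb u hu
    have ha' := ha u hu
    have hb' := hb u hu
    simp only [sform, Pi.add_apply, add_mul, mul_add, Finset.sum_add_distrib] at *
    rw [ha', hb', add_zero]
  smul_mem' := by
    intro c a ha u hu
    have ha' := ha u hu
    simp only [sform, Pi.smul_apply, smul_eq_mul] at *
    calc ∑ i : Fin (2*n), (if (i : ℕ) < n then 1 else -1) * (c * a i) *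
          u ⟨2*n - 1 - (i : ℕ), by have := i.isLt; omega⟩
        = c * ∑ i : Fin (2*n), (if (i : ℕ) < n then 1 else -1) * a i *
          u ⟨2*n - 1 - (i : ℕ), by have := i.isLt; omega⟩ := by
          rw [Finset.mul_sum]; congr 1; funext i; ring
      _ = 0 := by rw [ha', mul_zero]

/-- The points of the Bott–Samelson type resolution `SpR_{2n}`:
collections `(V_{i,j})` for `1 ≤ i ≤ j`, `i+j ≤ 2n`. -/
structure IsSpR (n : ℕ) (V : ℕ → ℕ → Submodule ℂ (Wsp n)) : Prop where
  dim : ∀ i j, 1 ≤ i → i ≤ j → i + j ≤ 2*n → Module.finrank ℂ (V i j) = i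
  sub : ∀ i j, 1 ≤ i → i ≤ j → i + j ≤ 2*n → V i j ≤ WIJ n i j
  mono : ∀ i j, 1 ≤ i → i + 1 ≤ j → (i + 1) + j ≤ 2*n → V i j ≤ V (i+1) j
  proj : ∀ i j, 1 ≤ i → i ≤ j → i + (j+1) ≤ 2*n →
    Submodule.map (prj n (j+1)) (V i j) ≤ V i (j+1)
  isot : ∀ i, 1 ≤ i → i ≤ n → IsIsotropic n (V i (2*n - i))

/-- A point of `SpR_{2n}` lies in the divisor `Z_{i,j}` if
`V_{i,j} = V_{i-1,j+1} + ℂ w_{j+1}` (with `V_0 = 0`). -/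
def InZ (n : ℕ) (V : ℕ → ℕ → Submodule ℂ (Wsp n)) (i j : ℕ) : Prop :=
  V i j = (if i = 1 then ⊥ else V (i-1) (j+1)) ⊔ Submodule.span ℂ {wvec n (j+1)}

/-!
For `l ≠ j` the vector `w_{l+1}` lies in no `V_{k,l}`: at the first `k` where it appears, the
dimension count together with `pr_{l+1}(V_{k-1,l}) ⊆ V_{k-1,l+1}` forces
`V_{k,l} = V_{k-1,l+1} + ℂ w_{l+1}`, i.e. the point lies in `Z_{k,l}`.

Now let `l > j` and let `v ∈ V_{k,l}` vanish on `w_1, …, w_l`. It suffices to show `pr_{l+1} v = 0`,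
since then `v ∈ ℂ w_{l+1}`. Below the wall `k + l = 2n` this follows from `pr_{l+1} v ∈ V_{k,l+1}`
by downward induction on `l`. On the wall, induction on `k` says that `V_{k-1,l} ⊆ W_{k-1,l}`
projects isomorphically onto its first `k-1` coordinates, and pairing `v` with suitable vectors of
`V_{k-1,l} ⊆ V_{k,l}` in the isotropic space `V_{k,l}` kills the last `k-1` coordinates of `v`.
-/

section Coordinates

variable {n : ℕ}

lemma wvec_succ (a : Fin (2*n)) : wvec n ((a : ℕ) + 1) = fun b => if a = b then 1 else 0 := by
  funext b
  simp only [wvec, Nat.add_right_cancel_iff, Fin.val_inj, eq_comm]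

lemma wvec_ne_zero {l : ℕ} (hl : l < 2*n) : wvec n (l+1) ≠ 0 := by
  intro h
  simpa [wvec] using congrFun h ⟨l, hl⟩

lemma mem_WIJ {i j : ℕ} {x : Wsp n} :
    x ∈ WIJ n i j ↔ ∀ a : Fin (2*n), i ≤ (a : ℕ) → (a : ℕ) < j → x a = 0 := by
  let Z : Submodule ℂ (Wsp n) :=
    ⨅ (a : Fin (2*n)) (_ : i ≤ (a : ℕ) ∧ (a : ℕ) < j), LinearMap.ker (LinearMap.proj a)
  have hZ : ∀ y, y ∈ Z ↔ ∀ a : Fin (2*n), i ≤ (a : ℕ) → (a : ℕ) < j → y a = 0 := by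
    simp [Z, Submodule.mem_iInf, and_imp]
  suffices WIJ n i j = Z by rw [this, hZ]
  apply le_antisymm
  · refine Submodule.span_le.2 ?_
    rintro _ ⟨k, hk, rfl⟩
    refine (hZ _).2 fun a h1 h2 => ?_
    simp only [wvec]
    rw [if_neg]
    rcases hk with ⟨-, hk⟩ | ⟨hk, -⟩ <;> omega
  · intro y hy
    rw [pi_eq_sum_univ y]
    refine Submodule.sum_mem _ fun a _ => ?_
    by_cases ha : i ≤ (a : ℕ) ∧ (a : ℕ) < j
    · rw [(hZ y).1 hy a ha.1 ha.2, zero_smul]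
      exact Submodule.zero_mem _
    · rw [← wvec_succ]
      refine Submodule.smul_mem _ _ (Submodule.subset_span ⟨_, ?_, rfl⟩)
      simp only [Set.mem_ofPred_eq]
      omega

lemma prj_apply (k : ℕ) (x : Wsp n) (a : Fin (2*n)) :
    prj n k x a = if (a : ℕ) + 1 = k then 0 else x a := rfl

lemma prj_add_smul_wvec {l : ℕ} (hl : l < 2*n) (x : Wsp n) :
    prj n (l+1) x + x ⟨l, hl⟩ • wvec n (l+1) = x := by
  funext a
  simp only [Pi.add_apply, Pi.smul_apply, prj_apply, wvec, smul_eq_mul]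
  by_cases h : (a : ℕ) = l
  · obtain rfl : a = ⟨l, hl⟩ := Fin.ext h
    simp
  · simp [h]

lemma prj_eq_zero_iff {l : ℕ} {x : Wsp n} :
    prj n (l+1) x = 0 ↔ ∀ a : Fin (2*n), (a : ℕ) ≠ l → x a = 0 := by
  simp only [funext_iff, prj_apply, Pi.zero_apply, Nat.add_right_cancel_iff]
  exact forall_congr' fun a => by by_cases h : (a : ℕ) = l <;> simp [h]

lemma prj_mem_WIJ_zero_succ {l : ℕ} {x : Wsp n} (hx : x ∈ WIJ n 0 l) :
    prj n (l+1) x ∈ WIJ n 0 (l+1) := by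
  rw [mem_WIJ] at hx ⊢
  intro a _ ha
  rw [prj_apply]
  split_ifs with h
  · rfl
  · exact hx a (Nat.zero_le _) (by omega)

lemma le_sup_span_wvec_of_map_prj_le {l : ℕ} (hl : l < 2*n) {U U' : Submodule ℂ (Wsp n)}
    (h : U.map (prj n (l+1)) ≤ U') : U ≤ U' ⊔ Submodule.span ℂ {wvec n (l+1)} := by
  intro u hu
  rw [← prj_add_smul_wvec hl u]
  exact Submodule.add_mem_sup (h (Submodule.mem_map_of_mem hu))
    (Submodule.smul_mem _ _ (Submodule.mem_span_singleton_self _))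

lemma eq_zero_of_prj_eq_zero {l : ℕ} (hl : l < 2*n) {U : Submodule ℂ (Wsp n)}
    (hw : wvec n (l+1) ∉ U) {v : Wsp n} (hv : v ∈ U) (h : prj n (l+1) v = 0) : v = 0 := by
  have hv' := prj_add_smul_wvec hl v
  rw [h, zero_add] at hv'
  by_contra hne
  have hc : v ⟨l, hl⟩ ≠ 0 := fun hc => hne (by rw [← hv', hc, zero_smul])
  refine hw ?_
  rw [← inv_smul_smul₀ hc (wvec n (l+1)), hv']
  exact U.smul_mem _ hv

lemma sform_eq_sum_rev (x y : Wsp n) :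
    sform n x y = ∑ a : Fin (2*n), (if (a : ℕ) < n then 1 else -1) * x a * y a.rev := by
  refine Finset.sum_congr rfl fun a _ => ?_
  congr 3
  omega

end Coordinates

section LinearAlgebra

variable {K ι : Type*} [Field K] [Fintype ι]

lemma exists_mem_eqOn_of_finrank_eq_card (U : Submodule K (ι → K)) (s : Finset ι)
    (hdim : Module.finrank K U = s.card) (hinj : ∀ u ∈ U, (∀ c ∈ s, u c = 0) → u = 0)
    (f : ι → K) : ∃ u ∈ U, ∀ c ∈ s, u c = f c := by
  let ψ : U →ₗ[K] (s → K) := LinearMap.funLeft K K (Subtype.val : s → ι) ∘ₗ U.subtype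
  have hψ : Function.Injective ψ := by
    rw [← LinearMap.ker_eq_bot, Submodule.eq_bot_iff]
    intro u hu
    exact Subtype.ext (hinj u u.2 fun c hc => congrFun (LinearMap.mem_ker.1 hu) ⟨c, hc⟩)
  obtain ⟨u, hu⟩ := ((LinearMap.injective_iff_surjective_of_finrank_eq_finrank
    (by simp [hdim])).1 hψ) fun c => f c
  exact ⟨u, u.2, fun c hc => congrFun hu ⟨c, hc⟩⟩

end LinearAlgebra

section SpR

variable {n : ℕ} {V : ℕ → ℕ → Submodule ℂ (Wsp n)}

lemma inZ_one_of_wvec_mem (hV : IsSpR n V) {l : ℕ} (hl : 1 ≤ l) (hsum : 1 + l ≤ 2*n)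
    (hw : wvec n (l+1) ∈ V 1 l) : InZ n V 1 l := by
  rw [InZ, if_pos rfl, bot_sup_eq]
  refine (Submodule.eq_of_le_of_finrank_le ((Submodule.span_singleton_le_iff_mem _ _).2 hw) ?_).symm
  rw [hV.dim 1 l le_rfl hl hsum, finrank_span_singleton (wvec_ne_zero (by omega))]

lemma inZ_succ_of_wvec_mem (hV : IsSpR n V) {k l : ℕ} (hk : 1 ≤ k) (hkl : k + 1 ≤ l)
    (hsum : k + 1 + l ≤ 2*n) (hw : wvec n (l+1) ∈ V (k+1) l) (hw' : wvec n (l+1) ∉ V k l) :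
    InZ n V (k+1) l := by
  have hl : l < 2*n := by omega
  have hspan : Module.finrank ℂ (Submodule.span ℂ {wvec n (l+1)}) = 1 :=
    finrank_span_singleton (wvec_ne_zero hl)
  have hdim := hV.dim (k+1) l (by omega) hkl hsum
  have hstep : V k l ⊔ Submodule.span ℂ {wvec n (l+1)} = V (k+1) l := by
    refine Submodule.eq_of_le_of_finrank_le
      (sup_le (hV.mono k l hk hkl hsum) ((Submodule.span_singleton_le_iff_mem _ _).2 hw)) ?_
    have hlt : V k l < V k l ⊔ Submodule.span ℂ {wvec n (l+1)} :=
      lt_of_le_of_ne le_sup_left fun h =>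
        hw' (h ▸ Submodule.mem_sup_right (Submodule.mem_span_singleton_self _))
    have := Submodule.finrank_lt_finrank_of_lt hlt
    rw [hV.dim k l hk (by omega) (by omega)] at this
    omega
  rw [InZ, if_neg (by omega), Nat.add_sub_cancel]
  refine Submodule.eq_of_le_of_finrank_le ?_ ?_
  · rw [← hstep]
    exact sup_le (le_sup_span_wvec_of_map_prj_le hl (hV.proj k l hk (by omega) (by omega)))
      le_sup_right
  · calc Module.finrank ℂ (V k (l+1) ⊔ Submodule.span ℂ {wvec n (l+1)} : Submodule ℂ (Wsp n))
        ≤ Module.finrank ℂ (V k (l+1)) + 1 :=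
          (Submodule.finrank_add_le_finrank_add_finrank _ _).trans_eq (by rw [hspan])
      _ = Module.finrank ℂ (V (k+1) l) := by rw [hV.dim k (l+1) hk (by omega) (by omega), hdim]

lemma wvec_succ_notMem_of_ne (hV : IsSpR n V) {i j : ℕ}
    (hO : ∀ k l, 1 ≤ k → k ≤ l → k + l ≤ 2*n → (k, l) ≠ (i, j) → ¬ InZ n V k l)
    {l : ℕ} (hlj : l ≠ j) : ∀ k, 1 ≤ k → k ≤ l → k + l ≤ 2*n → wvec n (l+1) ∉ V k l := by
  intro k
  induction k with
  | zero => omega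
  | succ k ih =>
    intro _ hkl hsum hw
    have hne : (k + 1, l) ≠ (i, j) := by simp [hlj]
    rcases Nat.eq_zero_or_pos k with rfl | hk
    · exact hO 1 l le_rfl hkl hsum hne (inZ_one_of_wvec_mem hV hkl hsum hw)
    · by_cases hw' : wvec n (l+1) ∈ V k l
      · exact ih hk (by omega) (by omega) hw'
      · exact hO (k+1) l (by omega) hkl hsum hne (inZ_succ_of_wvec_mem hV hk hkl hsum hw hw')

lemma inf_WIJ_zero_eq_bot_of_prj_eq_zero (hV : IsSpR n V) {i j : ℕ}
    (hO : ∀ k l, 1 ≤ k → k ≤ l → k + l ≤ 2*n → (k, l) ≠ (i, j) → ¬ InZ n V k l)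
    {k l : ℕ} (hk : 1 ≤ k) (hkl : k ≤ l) (hsum : k + l ≤ 2*n) (hjl : j < l)
    (hprj : ∀ v ∈ V k l, v ∈ WIJ n 0 l → prj n (l+1) v = 0) : V k l ⊓ WIJ n 0 l = ⊥ :=
  (Submodule.eq_bot_iff _).2 fun v hv =>
    eq_zero_of_prj_eq_zero (by omega) (wvec_succ_notMem_of_ne hV hO (by omega) k hk hkl hsum)
      hv.1 (hprj v hv.1 hv.2)

end SpR

lemma coord_eq_zero_of_isotropic {n m l : ℕ} {U U' : Submodule ℂ (Wsp n)} (hU : IsIsotropic n U)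
    (hU'U : U' ≤ U) (hU'W : U' ≤ WIJ n m l) (hdim : Module.finrank ℂ U' = m)
    (hbot : U' ⊓ WIJ n 0 l = ⊥) (hml : m < l) (hwall : m + 1 + l = 2*n) {v : Wsp n}
    (hv : v ∈ U) (hvl : v ∈ WIJ n 0 l) (a : Fin (2*n)) (ha : l < a) : v a = 0 := by
  let s : Finset (Fin (2*n)) := {c | (c : ℕ) < m}
  have hinj : ∀ u ∈ U', (∀ c ∈ s, u c = 0) → u = 0 := fun u hu hs =>
    (Submodule.eq_bot_iff _).1 hbot u ⟨hu, mem_WIJ.2 fun c _ hc => if hcm : (c : ℕ) < m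
      then hs c (by simpa [s] using hcm) else mem_WIJ.1 (hU'W hu) c (by omega) hc⟩
  obtain ⟨u, hu, hus⟩ := exists_mem_eqOn_of_finrank_eq_card U' s
    (by rw [hdim, Fin.card_filter_val_lt]; omega) hinj fun c => if c = a.rev then 1 else 0
  have hu_rev : ∀ q : Fin (2*n), l ≤ (q : ℕ) → u q.rev = if q = a then 1 else 0 := by
    intro q hq
    by_cases hqm : (q.rev : ℕ) < m
    · simpa [Fin.rev_inj] using hus q.rev (by simpa [s] using hqm)
    · rw [if_neg (by rintro rfl; simp at hqm; omega)]
      exact mem_WIJ.1 (hU'W hu) q.rev (by omega) (by simp; omega)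
  have hform := hU v hv u (hU'U hu)
  rw [sform_eq_sum_rev, Finset.sum_eq_single a, hu_rev a ha.le, if_pos rfl] at hform
  · split_ifs at hform <;> simpa using hform
  · intro q _ hqa
    rcases lt_or_ge (q : ℕ) l with hq | hq
    · rw [mem_WIJ.1 hvl q (Nat.zero_le _) hq]; ring
    · rw [hu_rev q hq, if_neg hqa]; ring
  · simp

theorem statement15_general (n i j : ℕ)
    (V : ℕ → ℕ → Submodule ℂ (Wsp n)) (hV : IsSpR n V)
    (hO : ∀ k l, 1 ≤ k → k ≤ l → k + l ≤ 2*n → (k, l) ≠ (i, j) → ¬ InZ n V k l) :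
    ∀ k l, 1 ≤ k → k ≤ l → k + l ≤ 2*n → j < l → V k l ⊓ WIJ n 0 l = ⊥ := by
  intro k
  induction k with
  | zero => omega
  | succ m ihm =>
    suffices h : ∀ d l, m + 1 + l + d = 2*n → m + 1 ≤ l → j < l → V (m+1) l ⊓ WIJ n 0 l = ⊥ from
      fun l _ hkl hsum hjl => h (2*n - (m + 1 + l)) l (by omega) hkl hjl
    intro d
    induction d with
    | zero =>
      intro l hwall hkl hjl
      refine inf_WIJ_zero_eq_bot_of_prj_eq_zero hV hO (by omega) hkl (by omega) hjl
        fun v hv hvl => prj_eq_zero_iff.2 fun a hal => ?_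
      rcases lt_or_gt_of_ne hal with hal | hal
      · exact mem_WIJ.1 hvl a (Nat.zero_le _) hal
      · have hiso := hV.isot (m+1) (by omega) (by omega)
        rw [show 2*n - (m+1) = l by omega] at hiso
        exact coord_eq_zero_of_isotropic hiso (hV.mono m l (by omega) hkl (by omega))
          (hV.sub m l (by omega) (by omega) (by omega))
          (hV.dim m l (by omega) (by omega) (by omega))
          (ihm l (by omega) (by omega) (by omega) hjl) (by omega) (by omega) hv hvl a hal
    | succ d ihd =>
      intro l hd hkl hjl
      refine inf_WIJ_zero_eq_bot_of_prj_eq_zero hV hO (by omega) hkl (by omega) hjl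
        fun v hv hvl => (Submodule.eq_bot_iff _).1 (ihd (l+1) (by omega) (by omega) (by omega)) _
          ⟨hV.proj (m+1) l (by omega) hkl (by omega) (Submodule.mem_map_of_mem hv),
            prj_mem_WIJ_zero_succ hvl⟩

theorem statement15 (n i j : ℕ) (hn : 1 ≤ n) (hi : 1 ≤ i) (hij : i ≤ j)
    (hjn : j < n)
    (V : ℕ → ℕ → Submodule ℂ (Wsp n)) (hV : IsSpR n V) (hZ : InZ n V i j)
    (hO : ∀ k l, 1 ≤ k → k ≤ l → k + l ≤ 2*n → (k, l) ≠ (i, j) → ¬ InZ n V k l) :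
    ∀ k l, 1 ≤ k → k ≤ l → k + l ≤ 2*n → j < l → V k l ⊓ WIJ n 0 l = ⊥ :=
  statement15_general n i j V hV hO

end
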